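/- arXiv:2602.06297 — 2 statements merged into one kernel-verified Lean document; each statement's English description precedes it below -/
import Mathlib

section
/- Let Z, Z_1, Z_2, ... be i.i.d. with law μ_Z, and let {Ĉ_t}_{t≥1} be random sets with Ĉ_t measurable with respect to σ(Z_1,...,Z_t). Then the statement 'P(P(Z ∈ Ĉ_T | Z_1,...,Z_T) ≥ 1 − α) ≥ 1 − δ for every positive-integer-valued random time T' is equivalent to 'P(inf_{t ≥ 1} μ_Z(Ĉ_t) ≥ 1 − α) ≥ 1 − δ', where μ_Z(Ĉ_t) = P(Z ∈ Ĉ_t | Z_1,...,Z_t). -/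
open MeasureTheory ENNReal

/-- Proposition 2, TUPAC equivalence.
The random sets `C t` are built from the first `t` data points and
`μZ (C t ω)` is the training-data-conditional coverage
`P(Z ∈ Ĉ_t | Z_1,…,Z_t)` of the independent test point `Z` with law `μZ`.
Provided each content `ω ↦ μZ (C t ω)` is measurable,
the time-uniform PAC property (conditional coverage at least `1 - α`
with probability at least `1 - δ` at every random time) is equivalent to the
minimum content being at least `1 - α` with probability at least `1 - δ`. -/
theorem tupac_equivalence
    {Ω : Type*} [MeasurableSpace Ω] (P : Measure Ω) [IsProbabilityMeasure P]
    {𝒵 : Type*} [MeasurableSpace 𝒵] (Z : Ω → 𝒵) (_hZ : Measurable Z)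
    (C : ℕ → Ω → Set 𝒵) (μZ : Measure 𝒵)
    (hμZ : μZ = P.map Z)
    (hmeas : ∀ t, Measurable fun ω => μZ (C t ω))
    (α δ : ℝ) :
    (∀ T : Ω → ℕ, Measurable T →
        ENNReal.ofReal (1 - δ) ≤ P {ω | ENNReal.ofReal (1 - α) ≤ μZ (C (T ω) ω)})
      ↔ ENNReal.ofReal (1 - δ) ≤
          P {ω | ENNReal.ofReal (1 - α) ≤ ⨅ t, μZ (C t ω)} := by
  constructor
  · intro h
    classical
    have hp : ∀ ω, ∃ N, (μZ (C N ω) < ENNReal.ofReal (1 - α) ∨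
        ∀ s, ENNReal.ofReal (1 - α) ≤ μZ (C s ω)) := by
      intro ω
      by_cases hc : ∀ s, ENNReal.ofReal (1 - α) ≤ μZ (C s ω)
      · exact ⟨0, Or.inr hc⟩
      · push_neg at hc
        obtain ⟨s, hs⟩ := hc
        exact ⟨s, Or.inl hs⟩
    have hT : Measurable fun ω => Nat.find (hp ω) := by
      refine measurable_find hp (fun k => ?_)
      rw [Set.setOf_or, Set.setOf_forall]
      exact (measurableSet_lt (hmeas k) measurable_const).union
        (MeasurableSet.iInter fun s => measurableSet_le measurable_const (hmeas s))
    refine le_trans (h _ hT) (measure_mono ?_)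
    intro ω hω
    rcases Nat.find_spec (hp ω) with h1 | h2
    · exact ((not_le.mpr h1) hω).elim
    · exact le_iInf h2
  · intro h T _
    refine le_trans h (measure_mono ?_)
    intro ω hω
    exact le_trans hω (iInf_le (fun t => μZ (C t ω)) (T ω))
end

section
/- Let U_{β:t} denote the β-th order statistic of t i.i.d. standard uniform random variables, so U_{β:t} ~ Beta(β, t − β + 1). Then for x ≥ β/(t+1), P(U_{β:t} ≥ x) ≤ exp(−(t+1)·ψ(x, β/(t+1))), and for x ≤ β/(t+1), P(U_{β:t} ≤ x) ≤ exp(−(t+1)·ψ(x, β/(t+1))), where ψ(x, p) = p·log(p/x) + (1−p)·log((1−p)/(1−x)). -/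
/-!
`U_{β:t} ≥ x` forces fewer than `β` of the `U i` below `x`, and `U_{β:t} ≤ x` forces at least
`β` of them into `[0, x]`; both counts are `Binomial(t, x)`, so Chernoff's bound gives
`e^{-λ(β-1)} M^t` resp. `e^{-λβ} M^t` with `M = x e^λ + 1 - x`. Adding a `(t+1)`-st trial only
enlarges these (`e^λ ≤ M` for `λ ≤ 0`, `1 ≤ M` for `λ ≥ 0`), and at the tilt `λ` optimal for
the mean `m = β/(t+1)` one has `e^{-λβ} M^{t+1} = exp(-(t+1) ψ(x, m))`.
-/

open MeasureTheory ProbabilityTheory ENNReal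

/-- The `β`-th order statistic of the values `x 0, …, x (t-1)`:
the smallest `r` such that at least `β` of the values are `≤ r`. -/
noncomputable def orderStat (t β : ℕ) (x : ℕ → ℝ) : ℝ :=
  sInf {r : ℝ | β ≤ ((Finset.range t).filter (fun i => x i ≤ r)).card}

/-- The Kullback–Leibler divergence `ψ(x, p)` between Bernoulli(p) and
Bernoulli(x). -/
noncomputable def bernKL (x p : ℝ) : ℝ :=
  p * Real.log (p / x) + (1 - p) * Real.log ((1 - p) / (1 - x))

open Finset Real

lemma Finset.exists_le_card_filter_le {ι α : Type*} [LinearOrder α] {s : Finset ι}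
    {p : ι → Prop} [DecidablePred p] (f : ι → α) {β : ℕ} (hβ : 1 ≤ β)
    (h : β ≤ #{i ∈ s | p i}) : ∃ j ∈ s, p j ∧ β ≤ #{i ∈ s | f i ≤ f j} := by
  obtain ⟨j, hj, hmax⟩ := exists_max_image {i ∈ s | p i} f (card_pos.mp (by omega))
  rw [mem_filter] at hj
  exact ⟨j, hj.1, hj.2, h.trans <| card_le_card <| monotone_filter_right s fun i hi hpi =>
    hmax i (mem_filter.mpr ⟨hi, hpi⟩)⟩

section OrderStatistic

variable {t β : ℕ} {f : ℕ → ℝ}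

lemma isLeast_orderStat (hβ : 1 ≤ β) (hβt : β ≤ t) :
    IsLeast {r | β ≤ #{i ∈ range t | f i ≤ r}} (orderStat t β f) := by
  set S := {r | β ≤ #{i ∈ range t | f i ≤ r}}
  have hJ : {j ∈ range t | f j ∈ S}.Nonempty := by
    obtain ⟨j, hj, -, hjS⟩ := exists_le_card_filter_le (s := range t) (p := fun _ => True) f hβ
      (by simpa using hβt)
    exact ⟨j, mem_filter.mpr ⟨hj, hjS⟩⟩
  obtain ⟨j₀, hj₀, hmin⟩ := exists_min_image _ f hJ
  have hleast : IsLeast S (f j₀) := by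
    refine ⟨(mem_filter.mp hj₀).2, fun r hr => ?_⟩
    obtain ⟨j, hj, hjr, hjS⟩ := exists_le_card_filter_le f hβ hr
    exact (hmin j (mem_filter.mpr ⟨hj, hjS⟩)).trans hjr
  rwa [orderStat, hleast.csInf_eq]

lemma orderStat_le_iff (hβ : 1 ≤ β) (hβt : β ≤ t) {r : ℝ} :
    orderStat t β f ≤ r ↔ β ≤ #{i ∈ range t | f i ≤ r} :=
  ⟨fun h => (isLeast_orderStat hβ hβt).1.trans <| card_le_card <|
      monotone_filter_right _ fun _ _ hi => hi.trans h,
    fun h => (isLeast_orderStat hβ hβt).2 h⟩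

lemma card_filter_lt_lt_of_le_orderStat (hβ : 1 ≤ β) (hβt : β ≤ t) {x : ℝ}
    (h : x ≤ orderStat t β f) : #{i ∈ range t | f i < x} < β := by
  by_contra! hcard
  obtain ⟨j, -, hjx, hj⟩ := exists_le_card_filter_le f hβ hcard
  exact (h.trans ((orderStat_le_iff hβ hβt).mpr hj)).not_gt hjx

end OrderStatistic

section Chernoff

variable {Ω ι E : Type*} {U : ι → Ω → E} {B : Set E} [DecidablePred (· ∈ B)]

lemma card_filter_mem_eq_sum_indicator (s : Finset ι) :
    (fun ω => (#{i ∈ s | U i ω ∈ B} : ℝ)) = ∑ i ∈ s, (U i ⁻¹' B).indicator 1 := by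
  ext ω
  rw [natCast_card_filter, Finset.sum_apply]
  exact sum_congr rfl fun i _ => by by_cases h : U i ω ∈ B <;> simp [h]

variable [MeasurableSpace Ω] [MeasurableSpace E] {P : Measure Ω}

lemma mgf_indicator_one [IsProbabilityMeasure P] {A : Set Ω} (hA : MeasurableSet A) (l : ℝ) :
    mgf (A.indicator 1) P l = P.real A * exp l + (1 - P.real A) := by
  have hexp : (fun ω => exp (l * A.indicator 1 ω)) =
      fun ω => A.indicator (fun _ => exp l - 1) ω + 1 := by
    ext ω
    by_cases hω : ω ∈ A <;> simp [hω]
  rw [mgf, hexp, integral_add ((integrable_const _).indicator hA) (integrable_const 1),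
    integral_indicator_const _ hA, integral_const]
  simp only [smul_eq_mul, probReal_univ, mul_one]
  ring

lemma mgf_card_filter_mem (hU : ∀ i, Measurable (U i)) (hindep : iIndepFun U P)
    (hB : MeasurableSet B) {s : Finset ι} {q : ℝ} (hq : ∀ i ∈ s, P.real (U i ⁻¹' B) = q)
    (l : ℝ) : mgf (fun ω => (#{i ∈ s | U i ω ∈ B} : ℝ)) P l = (q * exp l + (1 - q)) ^ #s := by
  have := hindep.isProbabilityMeasure
  have hXindep : iIndepFun (fun i => (U i ⁻¹' B).indicator (1 : Ω → ℝ)) P :=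
    hindep.comp _ fun _ => measurable_const.indicator hB
  rw [card_filter_mem_eq_sum_indicator,
    hXindep.mgf_sum fun i => measurable_const.indicator (hU i hB), ← prod_const]
  exact prod_congr rfl fun i hi => by rw [mgf_indicator_one (hU i hB), hq i hi]

lemma integrable_exp_mul_card_filter_mem (hU : ∀ i, Measurable (U i)) (hB : MeasurableSet B)
    [IsFiniteMeasure P] (s : Finset ι) (l : ℝ) :
    Integrable (fun ω => exp (l * #{i ∈ s | U i ω ∈ B})) P := by
  have hmeas : Measurable fun ω => (#{i ∈ s | U i ω ∈ B} : ℝ) := by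
    rw [card_filter_mem_eq_sum_indicator]
    fun_prop (disch := exact hU _ hB)
  refine .of_bound (hmeas.const_mul l).exp.aestronglyMeasurable (exp (|l| * #s))
    (ae_of_all _ fun ω => ?_)
  rw [norm_of_nonneg (exp_nonneg _), exp_le_exp]
  have hcard : (#{i ∈ s | U i ω ∈ B} : ℝ) ≤ #s := by exact_mod_cast card_filter_le _ _
  calc l * #{i ∈ s | U i ω ∈ B} ≤ |l| * #{i ∈ s | U i ω ∈ B} := by
        gcongr; exact le_abs_self l
    _ ≤ |l| * #s := by gcongr

variable [IsProbabilityMeasure P]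

lemma measureReal_le_card_filter_mem_le (hU : ∀ i, Measurable (U i)) (hindep : iIndepFun U P)
    (hB : MeasurableSet B) {s : Finset ι} {q : ℝ} (hq : ∀ i ∈ s, P.real (U i ⁻¹' B) = q)
    {l : ℝ} (hl : 0 ≤ l) (k : ℝ) :
    P.real {ω | k ≤ #{i ∈ s | U i ω ∈ B}} ≤ exp (-l * k) * (q * exp l + (1 - q)) ^ #s := by
  rw [← mgf_card_filter_mem hU hindep hB hq]
  exact measure_ge_le_exp_mul_mgf k hl (integrable_exp_mul_card_filter_mem hU hB s l)

lemma measureReal_card_filter_mem_le_le (hU : ∀ i, Measurable (U i)) (hindep : iIndepFun U P)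
    (hB : MeasurableSet B) {s : Finset ι} {q : ℝ} (hq : ∀ i ∈ s, P.real (U i ⁻¹' B) = q)
    {l : ℝ} (hl : l ≤ 0) (k : ℝ) :
    P.real {ω | #{i ∈ s | U i ω ∈ B} ≤ k} ≤ exp (-l * k) * (q * exp l + (1 - q)) ^ #s := by
  rw [← mgf_card_filter_mem hU hindep hB hq]
  exact measure_le_le_exp_mul_mgf k hl (integrable_exp_mul_card_filter_mem hU hB s l)

end Chernoff

section UniformLaw

variable {Ω : Type*} [MeasurableSpace Ω] {P : Measure Ω} {X : Ω → ℝ} {x : ℝ}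

lemma measureReal_preimage_Iic_of_map_eq_uniform (hX : Measurable X)
    (hlaw : P.map X = volume.restrict (Set.Icc 0 1)) (hx : x ∈ Set.Icc 0 1) :
    P.real (X ⁻¹' Set.Iic x) = x := by
  have h : Set.Iic x ∩ Set.Icc 0 1 = Set.Icc 0 x := by
    ext y; simp only [Set.mem_inter_iff, Set.mem_Iic, Set.mem_Icc]; grind
  rw [measureReal_def, ← Measure.map_apply hX measurableSet_Iic, hlaw,
    Measure.restrict_apply measurableSet_Iic, h, Real.volume_Icc, sub_zero, toReal_ofReal hx.1]

lemma measureReal_preimage_Iio_of_map_eq_uniform (hX : Measurable X)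
    (hlaw : P.map X = volume.restrict (Set.Icc 0 1)) (hx : x ∈ Set.Icc 0 1) :
    P.real (X ⁻¹' Set.Iio x) = x := by
  have h : Set.Iio x ∩ Set.Icc 0 1 = Set.Ico 0 x := by
    ext y; simp only [Set.mem_inter_iff, Set.mem_Iio, Set.mem_Icc, Set.mem_Ico]; grind
  rw [measureReal_def, ← Measure.map_apply hX measurableSet_Iio, hlaw,
    Measure.restrict_apply measurableSet_Iio, h, Real.volume_Ico, sub_zero, toReal_ofReal hx.1]

end UniformLaw

section BernoulliKL

/-- The minimiser of `λ ↦ exp (-λ m) * (x * exp λ + (1 - x))`. -/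
noncomputable def optimalTilt (x m : ℝ) : ℝ := log (m * (1 - x) / (x * (1 - m)))

variable {x m : ℝ}

lemma exp_optimalTilt (hx : x ∈ Set.Ioo 0 1) (hm : m ∈ Set.Ioo 0 1) :
    exp (optimalTilt x m) = m * (1 - x) / (x * (1 - m)) :=
  exp_log <| div_pos (mul_pos hm.1 (sub_pos.mpr hx.2)) (mul_pos hx.1 (sub_pos.mpr hm.2))

lemma bernoulli_mgf_optimalTilt (hx : x ∈ Set.Ioo 0 1) (hm : m ∈ Set.Ioo 0 1) :
    x * exp (optimalTilt x m) + (1 - x) = (1 - x) / (1 - m) := by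
  have hm1 : 1 - m ≠ 0 := (sub_pos.mpr hm.2).ne'
  rw [exp_optimalTilt hx hm]
  field_simp [hx.1.ne', hm1]
  ring

lemma optimalTilt_nonpos (hx : x ∈ Set.Ioo 0 1) (hm : m ∈ Set.Ioo 0 1) (hmx : m ≤ x) :
    optimalTilt x m ≤ 0 := by
  rw [← exp_le_one_iff, exp_optimalTilt hx hm, div_le_one (mul_pos hx.1 (sub_pos.mpr hm.2))]
  nlinarith

lemma optimalTilt_nonneg (hx : x ∈ Set.Ioo 0 1) (hm : m ∈ Set.Ioo 0 1) (hxm : x ≤ m) :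
    0 ≤ optimalTilt x m := by
  rw [← one_le_exp_iff, exp_optimalTilt hx hm, one_le_div (mul_pos hx.1 (sub_pos.mpr hm.2))]
  nlinarith

lemma exp_neg_optimalTilt_mul_mul_pow (hx : x ∈ Set.Ioo 0 1) (hm : m ∈ Set.Ioo 0 1) (n : ℕ) :
    exp (-optimalTilt x m * (n * m)) * (x * exp (optimalTilt x m) + (1 - x)) ^ n =
      exp (-n * bernKL x m) := by
  have hx1 : 1 - x ≠ 0 := (sub_pos.mpr hx.2).ne'
  have hm1 : 1 - m ≠ 0 := (sub_pos.mpr hm.2).ne'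
  have hsingle : exp (-optimalTilt x m * m) * ((1 - x) / (1 - m)) = exp (-bernKL x m) := by
    rw [← exp_log (div_pos (sub_pos.mpr hx.2) (sub_pos.mpr hm.2)), ← exp_add, optimalTilt,
      bernKL, log_div hx1 hm1, log_div (mul_ne_zero hm.1.ne' hx1) (mul_ne_zero hx.1.ne' hm1),
      log_mul hm.1.ne' hx1, log_mul hx.1.ne' hm1, log_div hm.1.ne' hx.1.ne', log_div hm1 hx1]
    ring_nf
  rw [bernoulli_mgf_optimalTilt hx hm,
    show -optimalTilt x m * (n * m) = n * (-optimalTilt x m * m) by ring,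
    show -(n : ℝ) * bernKL x m = n * -bernKL x m by ring, exp_nat_mul, exp_nat_mul, ← mul_pow,
    hsingle]

end BernoulliKL

section OrderStatisticTails

variable {Ω : Type*} [MeasurableSpace Ω] {P : Measure Ω} [IsProbabilityMeasure P]
  {U : ℕ → Ω → ℝ} {t β : ℕ} {x l : ℝ}

lemma measureReal_le_orderStat_le (hU : ∀ i, Measurable (U i))
    (hlaw : ∀ i, P.map (U i) = volume.restrict (Set.Icc 0 1)) (hindep : iIndepFun U P)
    (hβ : 1 ≤ β) (hβt : β ≤ t) (hx : x ∈ Set.Icc 0 1) (hl : l ≤ 0) :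
    P.real {ω | x ≤ orderStat t β (fun i => U i ω)} ≤
      exp (-l * β) * (x * exp l + (1 - x)) ^ (t + 1) := by
  have hsub : {ω | x ≤ orderStat t β (fun i => U i ω)} ⊆
      {ω | (#{i ∈ range t | U i ω ∈ Set.Iio x} : ℝ) ≤ β - 1} := fun ω hω => by
    have := card_filter_lt_lt_of_le_orderStat hβ hβt hω
    simp only [Set.mem_Iio, le_sub_iff_add_le]
    exact_mod_cast this
  have hexp_le : exp l ≤ x * exp l + (1 - x) := by nlinarith [exp_le_one_iff.mpr hl, hx.2]
  calc P.real {ω | x ≤ orderStat t β (fun i => U i ω)}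
      ≤ P.real {ω | (#{i ∈ range t | U i ω ∈ Set.Iio x} : ℝ) ≤ β - 1} := measureReal_mono hsub
    _ ≤ exp (-l * (β - 1)) * (x * exp l + (1 - x)) ^ #(range t) :=
      measureReal_card_filter_mem_le_le hU hindep measurableSet_Iio
        (fun i _ => measureReal_preimage_Iio_of_map_eq_uniform (hU i) (hlaw i) hx) hl _
    _ = exp (-l * β) * (exp l * (x * exp l + (1 - x)) ^ t) := by
      rw [card_range, mul_sub, mul_one, sub_neg_eq_add, exp_add]
      ring
    _ ≤ exp (-l * β) * (x * exp l + (1 - x)) ^ (t + 1) := by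
      rw [pow_succ']
      gcongr
      exact pow_nonneg ((exp_pos l).le.trans hexp_le) t

lemma measureReal_orderStat_le_le (hU : ∀ i, Measurable (U i))
    (hlaw : ∀ i, P.map (U i) = volume.restrict (Set.Icc 0 1)) (hindep : iIndepFun U P)
    (hβ : 1 ≤ β) (hβt : β ≤ t) (hx : x ∈ Set.Icc 0 1) (hl : 0 ≤ l) :
    P.real {ω | orderStat t β (fun i => U i ω) ≤ x} ≤
      exp (-l * β) * (x * exp l + (1 - x)) ^ (t + 1) := by
  have hsub : {ω | orderStat t β (fun i => U i ω) ≤ x} ⊆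
      {ω | (β : ℝ) ≤ #{i ∈ range t | U i ω ∈ Set.Iic x}} := fun ω hω => by
    have := (orderStat_le_iff hβ hβt).mp hω
    simp only [Set.mem_Iic]
    exact_mod_cast this
  have hone_le : 1 ≤ x * exp l + (1 - x) := by nlinarith [one_le_exp_iff.mpr hl, hx.1]
  calc P.real {ω | orderStat t β (fun i => U i ω) ≤ x}
      ≤ P.real {ω | (β : ℝ) ≤ #{i ∈ range t | U i ω ∈ Set.Iic x}} := measureReal_mono hsub
    _ ≤ exp (-l * β) * (x * exp l + (1 - x)) ^ #(range t) :=
      measureReal_le_card_filter_mem_le hU hindep measurableSet_Iic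
        (fun i _ => measureReal_preimage_Iic_of_map_eq_uniform (hU i) (hlaw i) hx) hl _
    _ ≤ exp (-l * β) * (x * exp l + (1 - x)) ^ (t + 1) := by
      rw [card_range]
      exact mul_le_mul_of_nonneg_left (pow_le_pow_right₀ hone_le t.le_succ) (exp_pos _).le

end OrderStatisticTails

/-- Dümbgen's Beta tail bounds.
Let `U_{β:t}` be the `β`-th order statistic of `t` i.i.d. standard uniform
random variables (so `U_{β:t} ~ Beta(β, t − β + 1)`).  Then for
`x ≥ β/(t+1)` the upper tail `P(U_{β:t} ≥ x)` is at most
`exp(−(t+1)ψ(x, β/(t+1)))`, and for `x ≤ β/(t+1)` the lower tail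
`P(U_{β:t} ≤ x)` satisfies the same bound. -/
theorem dumbgen_beta_tail_bounds
    {Ω : Type*} [MeasurableSpace Ω] (P : Measure Ω) [IsProbabilityMeasure P]
    (U : ℕ → Ω → ℝ) (hU : ∀ i, Measurable (U i))
    (hlaw : ∀ i, P.map (U i) = volume.restrict (Set.Icc (0:ℝ) 1))
    (hindep : iIndepFun U P)
    (t β : ℕ) (hβ : 1 ≤ β) (hβt : β ≤ t)
    (x : ℝ) (hx : x ∈ Set.Ioo (0:ℝ) 1) :
    ((β : ℝ) / (t + 1) ≤ x →
      P {ω | x ≤ orderStat t β (fun i => U i ω)} ≤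
        ENNReal.ofReal (Real.exp (-(t + 1) * bernKL x ((β : ℝ) / (t + 1))))) ∧
    (x ≤ (β : ℝ) / (t + 1) →
      P {ω | orderStat t β (fun i => U i ω) ≤ x} ≤
        ENNReal.ofReal (Real.exp (-(t + 1) * bernKL x ((β : ℝ) / (t + 1))))) := by
  set m : ℝ := β / (t + 1)
  have ht : (0 : ℝ) < t + 1 := by positivity
  have hm : m ∈ Set.Ioo 0 1 :=
    ⟨by positivity, (div_lt_one ht).mpr (by exact_mod_cast Nat.lt_succ_of_le hβt)⟩
  have hbound : exp (-optimalTilt x m * β) * (x * exp (optimalTilt x m) + (1 - x)) ^ (t + 1) =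
      exp (-(t + 1) * bernKL x m) := by
    have hβm : (β : ℝ) = ((t + 1 : ℕ) : ℝ) * m := by
      push_cast; exact (mul_div_cancel₀ _ ht.ne').symm
    rw [hβm, exp_neg_optimalTilt_mul_mul_pow hx hm, Nat.cast_succ]
  have hx' : x ∈ Set.Icc 0 1 := Set.Ioo_subset_Icc_self hx
  refine ⟨fun hmx => ?_, fun hxm => ?_⟩
  · rw [← ofReal_measureReal, ← hbound]
    exact ofReal_le_ofReal <| measureReal_le_orderStat_le hU hlaw hindep hβ hβt hx'
      (optimalTilt_nonpos hx hm hmx)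
  · rw [← ofReal_measureReal, ← hbound]
    exact ofReal_le_ofReal <| measureReal_orderStat_le_le hU hlaw hindep hβ hβt hx'
      (optimalTilt_nonneg hx hm hxm)
end
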